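/- arXiv:2309.03625 — 2 statements merged into one kernel-verified Lean document; each statement's English description precedes it below -/
import Mathlib

section
/- Let H be a positive self-adjoint operator on ℋ, ψ ∈ ℋ, τ in the open lower half-plane, and k ∈ ℕ. Then the k-th complex derivative of the map τ ↦ e^{-iτH}ψ equals (-i)^k H^k e^{-iτH}ψ; i.e., (i d/dτ)^k e^{-iτH}ψ = H^k e^{-iτH}ψ. -/
/-! Since `h ≥ 0`, on the lower half-plane `Im σ ≤ b < 0` the multipliers `(-ih)^k e^{-iσh}` are
bounded by `k!/|b|^k`, uniformly in `x`. The mean value theorem on the half-plane `Re w ≤ bc`,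
where `|exp| ≤ e^{bc}`, bounds the second-order Taylor remainder of `σ ↦ e^{-iσc}` by
`c² e^{bc} |σ - τ|²`; after multiplication by `c^k` this is again uniform in `c = h x`. So the
remainder of the `Lᵖ`-valued curve is `O(|σ - τ|²)`: each complex derivative multiplies by `-ih`,
and induction on `k` concludes. -/

open MeasureTheory Complex Filter Asymptotics Topology
open scoped Nat ENNReal

theorem Real.pow_mul_exp_neg_mul_le {a t : ℝ} (ha : 0 < a) (ht : 0 ≤ t) (k : ℕ) :
    t ^ k * Real.exp (-(a * t)) ≤ k ! / a ^ k := by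
  have hexp := Real.pow_div_factorial_le_exp (x := a * t) (mul_nonneg ha.le ht) k
  rw [mul_pow, div_le_iff₀ (by positivity)] at hexp
  rw [le_div_iff₀ (by positivity), Real.exp_neg]
  calc t ^ k * (Real.exp (a * t))⁻¹ * a ^ k = a ^ k * t ^ k * (Real.exp (a * t))⁻¹ := by ring
    _ ≤ Real.exp (a * t) * k ! * (Real.exp (a * t))⁻¹ := by gcongr
    _ = k ! := by field_simp

theorem Complex.norm_exp_sub_exp_le {b : ℝ} {z w : ℂ} (hz : z.re ≤ b) (hw : w.re ≤ b) :
    ‖exp w - exp z‖ ≤ Real.exp b * ‖w - z‖ :=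
  (convex_halfSpace_re_le b).norm_image_sub_le_of_norm_hasDerivWithin_le
    (fun v _ => (hasDerivAt_exp v).hasDerivWithinAt)
    (fun v (hv : v.re ≤ b) => by rw [norm_exp]; exact Real.exp_le_exp.2 hv) hz hw

theorem Complex.norm_exp_sub_exp_sub_mul_le {b : ℝ} {z w : ℂ} (hz : z.re ≤ b) (hw : w.re ≤ b) :
    ‖exp w - exp z - (w - z) * exp z‖ ≤ Real.exp b * ‖w - z‖ ^ 2 := by
  set s := {v : ℂ | v.re ≤ b} ∩ Metric.closedBall z ‖w - z‖
  have hderiv : ∀ v ∈ s, HasDerivWithinAt (fun v => exp v - v * exp z) (exp v - exp z) s v :=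
    fun v _ => ((hasDerivAt_exp v).sub ((hasDerivAt_id v).mul_const (exp z))).hasDerivWithinAt
      |>.congr_deriv (by rw [one_mul])
  have hbound : ∀ v ∈ s, ‖exp v - exp z‖ ≤ Real.exp b * ‖w - z‖ := fun v ⟨hv, hvz⟩ =>
    (norm_exp_sub_exp_le hz hv).trans (by gcongr; simpa [dist_eq_norm] using hvz)
  have hs : Convex ℝ s := (convex_halfSpace_re_le b).inter (convex_closedBall _ _)
  have := hs.norm_image_sub_le_of_norm_hasDerivWithin_le hderiv hbound
    ⟨hz, Metric.mem_closedBall_self (norm_nonneg _)⟩ ⟨hw, by simp [dist_eq_norm]⟩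
  calc ‖exp w - exp z - (w - z) * exp z‖ = ‖exp w - w * exp z - (exp z - z * exp z)‖ := by
        ring_nf
    _ ≤ Real.exp b * ‖w - z‖ ^ 2 := by rw [sq, ← mul_assoc]; exact this

/-- The multiplier of `(-iH)^k e^{-iτH}` when `H` is multiplication by `c`. -/
noncomputable def evolutionSymbol (k : ℕ) (τ : ℂ) (c : ℝ) : ℂ :=
  (-I * c) ^ k * exp (-(I * τ * c))

section evolutionSymbol

variable {k : ℕ} {τ σ : ℂ} {c : ℝ}

theorem continuous_evolutionSymbol : Continuous (evolutionSymbol k τ) := by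
  unfold evolutionSymbol; fun_prop

theorem norm_evolutionSymbol (hc : 0 ≤ c) :
    ‖evolutionSymbol k τ c‖ = c ^ k * Real.exp (τ.im * c) := by
  simp [evolutionSymbol, norm_exp, abs_of_nonneg hc]

theorem norm_evolutionSymbol_le (hτ : τ.im < 0) (hc : 0 ≤ c) :
    ‖evolutionSymbol k τ c‖ ≤ k ! / (-τ.im) ^ k := by
  rw [norm_evolutionSymbol hc, show τ.im * c = -(-τ.im * c) by ring]
  exact Real.pow_mul_exp_neg_mul_le (neg_pos.2 hτ) hc k

theorem norm_evolutionSymbol_sub_sub_mul_le {b : ℝ} (hb : b < 0) (hτ : τ.im ≤ b) (hσ : σ.im ≤ b)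
    (hc : 0 ≤ c) :
    ‖evolutionSymbol k σ c - evolutionSymbol k τ c - (σ - τ) * evolutionSymbol (k + 1) τ c‖ ≤
      (k + 2) ! / (-b) ^ (k + 2) * ‖σ - τ‖ ^ 2 := by
  set z : ℂ := -(I * τ * c)
  set w : ℂ := -(I * σ * c)
  have hre : ∀ ρ : ℂ, ρ.im ≤ b → (-(I * ρ * c)).re ≤ b * c := fun ρ hρ => by
    simpa using mul_le_mul_of_nonneg_right hρ hc
  have hwz : ‖w - z‖ = ‖σ - τ‖ * c := by
    rw [show w - z = -I * (σ - τ) * c by ring]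
    simp [abs_of_nonneg hc]
  have hfactor : evolutionSymbol k σ c - evolutionSymbol k τ c
      - (σ - τ) * evolutionSymbol (k + 1) τ c =
        (-I * c) ^ k * (exp w - exp z - (w - z) * exp z) := by
    simp only [evolutionSymbol, w, z]; ring
  calc ‖evolutionSymbol k σ c - evolutionSymbol k τ c - (σ - τ) * evolutionSymbol (k + 1) τ c‖
      = c ^ k * ‖exp w - exp z - (w - z) * exp z‖ := by
        rw [hfactor]; simp [abs_of_nonneg hc]
    _ ≤ c ^ k * (Real.exp (b * c) * (‖σ - τ‖ * c) ^ 2) := by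
        rw [← hwz]; gcongr; exact norm_exp_sub_exp_sub_mul_le (hre τ hτ) (hre σ hσ)
    _ = (c ^ (k + 2) * Real.exp (-((-b) * c))) * ‖σ - τ‖ ^ 2 := by ring_nf
    _ ≤ (k + 2) ! / (-b) ^ (k + 2) * ‖σ - τ‖ ^ 2 := by
        gcongr; exact Real.pow_mul_exp_neg_mul_le (neg_pos.2 hb) hc _

end evolutionSymbol

section Lp

variable {X : Type*} [MeasurableSpace X] {μ : Measure X} {p : ℝ≥0∞} {h : X → ℝ}

theorem memLp_evolutionSymbol_mul (hh : Measurable h) (hpos : ∀ x, 0 ≤ h x) (ψ : Lp ℂ p μ)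
    (k : ℕ) {τ : ℂ} (hτ : τ.im < 0) :
    MemLp (fun x => evolutionSymbol k τ (h x) * ψ x) p μ :=
  (Lp.memLp ψ).of_le_mul
    (((continuous_evolutionSymbol.measurable.comp hh).aestronglyMeasurable).mul
      (Lp.aestronglyMeasurable ψ))
    (Eventually.of_forall fun x => by
      rw [norm_mul]; gcongr; exact norm_evolutionSymbol_le hτ (hpos x))

theorem norm_sub_sub_smul_le_of_ae_eq_evolutionSymbol_mul (hh : Measurable h)
    (hpos : ∀ x, 0 ≤ h x) {ψ : Lp ℂ p μ} {k : ℕ} {F : ℂ → Lp ℂ p μ}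
    (hF : ∀ σ : ℂ, σ.im < 0 → F σ =ᵐ[μ] fun x => evolutionSymbol k σ (h x) * ψ x)
    {b : ℝ} (hb : b < 0) {τ σ : ℂ} (hτ : τ.im ≤ b) (hσ : σ.im ≤ b) :
    ‖F σ - F τ - (σ - τ) • (memLp_evolutionSymbol_mul hh hpos ψ (k + 1) (hτ.trans_lt hb)).toLp‖ ≤
      (k + 2) ! / (-b) ^ (k + 2) * ‖σ - τ‖ ^ 2 * ‖ψ‖ := by
  have hF' := memLp_evolutionSymbol_mul hh hpos ψ (k + 1) (hτ.trans_lt hb)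
  refine Lp.norm_le_mul_norm_of_ae_le_mul ?_
  filter_upwards [Lp.coeFn_sub (F σ - F τ) ((σ - τ) • hF'.toLp), Lp.coeFn_sub (F σ) (F τ),
    Lp.coeFn_smul (σ - τ) hF'.toLp,
    hF σ (hσ.trans_lt hb), hF τ (hτ.trans_lt hb), hF'.coeFn_toLp] with x h₁ h₂ h₃ h₄ h₅ h₆
  simp only [h₁, h₂, h₃, h₄, h₅, h₆, Pi.sub_apply, Pi.smul_apply, smul_eq_mul]
  calc _ = ‖evolutionSymbol k σ (h x) - evolutionSymbol k τ (h x)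
          - (σ - τ) * evolutionSymbol (k + 1) τ (h x)‖ * ‖ψ x‖ := by
        rw [← norm_mul]; ring_nf
    _ ≤ _ := by gcongr; exact norm_evolutionSymbol_sub_sub_mul_le hb hτ hσ (hpos x)

variable [Fact (1 ≤ p)]

theorem hasDerivAt_of_ae_eq_evolutionSymbol_mul (hh : Measurable h)
    (hpos : ∀ x, 0 ≤ h x) {ψ : Lp ℂ p μ} {k : ℕ} {F : ℂ → Lp ℂ p μ}
    (hF : ∀ σ : ℂ, σ.im < 0 → F σ =ᵐ[μ] fun x => evolutionSymbol k σ (h x) * ψ x)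
    {τ : ℂ} (hτ : τ.im < 0) :
    HasDerivAt F (memLp_evolutionSymbol_mul hh hpos ψ (k + 1) hτ).toLp τ := by
  have hb : τ.im / 2 < 0 := by linarith
  have hnear : ∀ᶠ σ in 𝓝 τ, σ.im ≤ τ.im / 2 :=
    continuous_im.continuousAt.eventually (ge_mem_nhds (by linarith))
  have hbigO : (fun σ => F σ - F τ - (σ - τ) •
      (memLp_evolutionSymbol_mul hh hpos ψ (k + 1) hτ).toLp) =O[𝓝 τ] fun σ => ‖σ - τ‖ ^ 2 :=
    .of_bound _ <| hnear.mono fun σ hσ => by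
      simpa [mul_right_comm _ (‖σ - τ‖ ^ 2)] using
        norm_sub_sub_smul_le_of_ae_eq_evolutionSymbol_mul hh hpos hF hb (τ := τ) (by linarith) hσ
  have hlittleO : (fun σ : ℂ => ‖σ - τ‖ ^ 2) =o[𝓝 τ] fun σ => σ - τ :=
    (isLittleO_norm_pow_id one_lt_two).comp_tendsto (tendsto_sub_nhds_zero_iff.2 tendsto_id)
  exact hasDerivAt_iff_isLittleO.2 (hbigO.trans_isLittleO hlittleO)

theorem iteratedDerivWithin_ae_eq_evolutionSymbol_mul (hh : Measurable h)
    (hpos : ∀ x, 0 ≤ h x) {ψ : Lp ℂ p μ} {G : ℂ → Lp ℂ p μ}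
    (hG : ∀ σ : ℂ, σ.im < 0 → G σ =ᵐ[μ] fun x => exp (-(I * σ * h x)) * ψ x) :
    ∀ (k : ℕ) (τ : ℂ), τ.im < 0 → ⇑(iteratedDerivWithin k G {σ : ℂ | σ.im < 0} τ) =ᵐ[μ]
      fun x => evolutionSymbol k τ (h x) * ψ x
  | 0, τ, hτ => by simpa [evolutionSymbol] using hG τ hτ
  | k + 1, τ, hτ => by
    have hderiv := hasDerivAt_of_ae_eq_evolutionSymbol_mul hh hpos
      (iteratedDerivWithin_ae_eq_evolutionSymbol_mul hh hpos hG k) hτ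
    rw [iteratedDerivWithin_succ, hderiv.hasDerivWithinAt.derivWithin
      ((isOpen_lt continuous_im continuous_const).uniqueDiffWithinAt hτ)]
    exact MemLp.coeFn_toLp _

end Lp

theorem evolution_iterated_deriv_general
    {X : Type*} [MeasurableSpace X] (μ : Measure X)
    (h : X → ℝ) (hmeas : Measurable h) (hpos : ∀ x, 0 ≤ h x)
    (ψ : Lp ℂ 2 μ) (G : ℂ → Lp ℂ 2 μ)
    (hG : ∀ τ : ℂ, τ.im < 0 →
      (⇑(G τ) : X → ℂ) =ᵐ[μ] fun x => Complex.exp (-(I * τ * (h x : ℂ))) * ψ x)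
    (k : ℕ) (τ : ℂ) (hτ : τ.im < 0) :
    (⇑(iteratedDerivWithin k G {τ' : ℂ | τ'.im < 0} τ) : X → ℂ) =ᵐ[μ]
      fun x => (-I) ^ k * ((h x : ℂ)) ^ k * (Complex.exp (-(I * τ * (h x : ℂ))) * ψ x) := by
  filter_upwards [iteratedDerivWithin_ae_eq_evolutionSymbol_mul hmeas hpos hG k τ hτ] with x hx
  rw [hx, evolutionSymbol, mul_pow, mul_assoc]

/-- In the spectral model (H = multiplication by `h ≥ 0` on `L²(μ)`),
for `Im τ < 0` the `k`-th complex derivative of `τ ↦ e^{-iτH}ψ` equals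
`(-i)^k H^k e^{-iτH}ψ`, i.e. `(i d/dτ)^k e^{-iτH}ψ = H^k e^{-iτH}ψ`. -/
theorem evolution_iterated_deriv
    {X : Type*} [MeasurableSpace X] (μ : Measure X)
    [TopologicalSpace.SeparableSpace (Lp ℂ 2 μ)]
    (h : X → ℝ) (hmeas : Measurable h) (hpos : ∀ x, 0 ≤ h x)
    (ψ : Lp ℂ 2 μ) (G : ℂ → Lp ℂ 2 μ)
    (hG : ∀ τ : ℂ, τ.im < 0 →
      (⇑(G τ) : X → ℂ) =ᵐ[μ] fun x => Complex.exp (-(I * τ * (h x : ℂ))) * ψ x)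
    (k : ℕ) (τ : ℂ) (hτ : τ.im < 0) :
    (⇑(iteratedDerivWithin k G {τ' : ℂ | τ'.im < 0} τ) : X → ℂ) =ᵐ[μ]
      fun x => (-I) ^ k * ((h x : ℂ)) ^ k * (Complex.exp (-(I * τ * (h x : ℂ))) * ψ x) :=
  evolution_iterated_deriv_general μ h hmeas hpos ψ G hG k τ hτ
end

section
/- Let F : {Im τ ≤ 0} → ℋ be a nonzero bounded ℋ-valued function, analytic on the open lower half-plane, continuous on ℝ. Then for every γ > 0, it is not the case that ‖F(t)‖ ≤ C e^{-γ|t|} for all t ∈ ℝ and some constant C > 0. (Exponential decay in both time directions is forbidden.) -/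
/-!
Let `f` be the restriction of `F` to `ℝ`. Its exponential decay makes
`Φ(z) = ∫ e^{-izt} f(t) dt` holomorphic on the strip `|Im z| < γ`. For `ξ > 0`, Cauchy's theorem
moves the Gaussian-regularised integral `∫ e^{-iξt - εt²} F(t) dt` down to the line
`Im z = -ξ/(2ε)`, where it is at most `M e^{-ξ²/(4ε)} √(π/ε)`; letting `ε → 0` gives `Φ(ξ) = 0`.
By the identity theorem `Φ` vanishes on all of `ℝ`, so `f = 0` by Fourier inversion. Finally,
shifting `e^{-iξz - z²} F(z)` down to any line `Im z = a ≤ 0` shows that the Fourier transform of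
`t ↦ e^{-(t+ia)²} F(t + ia)` vanishes, so `F` vanishes on the whole closed half-plane.
-/

open Complex MeasureTheory Filter Set Topology
open scoped FourierTransform

lemma integrable_exp_neg_mul_abs {c : ℝ} (hc : 0 < c) :
    Integrable fun t : ℝ => Real.exp (-c * |t|) := by
  refine (Continuous.locallyIntegrable (by fun_prop)
    ).integrable_of_isBigO_atTop_of_norm_isNegInvariant (.of_forall fun t => by simp)
    (EventuallyEq.isBigO ?_)
    ⟨Ioi 0, Ioi_mem_atTop 0, exp_neg_integrableOn_Ioi 0 hc⟩
  filter_upwards [eventually_ge_atTop 0] with t ht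
  rw [abs_of_nonneg ht]

section

variable {E : Type*} [NormedAddCommGroup E] [NormedSpace ℂ E]

theorem integral_add_mul_I_eq_of_strip {f : ℂ → E} {a b : ℝ} (hab : a ≤ b) {g : ℝ → ℝ}
    (hc : ContinuousOn f (im ⁻¹' Icc a b)) (hd : DifferentiableOn ℂ f (im ⁻¹' Ioo a b))
    (hg : Integrable g) (hg0 : Tendsto g (cocompact ℝ) (𝓝 0))
    (hfg : ∀ z : ℂ, z.im ∈ Icc a b → ‖f z‖ ≤ g z.re) :
    ∫ t : ℝ, f (t + a * I) = ∫ t : ℝ, f (t + b * I) := by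
  have hline : ∀ y ∈ Icc a b, Integrable fun t : ℝ => f (t + y * I) := fun y hy =>
    hg.mono' ((hc.comp_continuous (f := fun t : ℝ => t + y * I) (by fun_prop)
      fun t => by simpa using hy).aestronglyMeasurable)
      (.of_forall fun t => by simpa using hfg (t + y * I) (by simpa using hy))
  have hside : ∀ x : ℝ → ℝ, Tendsto (g ∘ x) atTop (𝓝 0) →
      Tendsto (fun A => I • ∫ y in a..b, f (x A + y * I)) atTop (𝓝 0) := by
    intro x hx
    refine squeeze_zero_norm (fun A => ?_) (by simpa using hx.mul_const (b - a))
    rw [norm_smul, norm_I, one_mul, ← abs_of_nonneg (sub_nonneg.2 hab)]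
    refine intervalIntegral.norm_integral_le_of_norm_le_const fun y hy => ?_
    rw [uIoc_of_le hab] at hy
    simpa using hfg (x A + y * I) (by simpa using Ioc_subset_Icc_self hy)
  have hrect : ∀ A : ℝ, ((∫ x in -A..A, f (x + a * I)) - ∫ x in -A..A, f (x + b * I)) +
      I • (∫ y in a..b, f (A + y * I)) - I • (∫ y in a..b, f (-A + y * I)) = 0 := fun A => by
    simpa using integral_boundary_rect_eq_zero_of_continuousOn_of_differentiableOn f ⟨-A, a⟩ ⟨A, b⟩
      (hc.mono fun z hz => by simpa [uIcc_of_le hab] using hz.2)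
      (hd.mono fun z hz => by simpa [hab] using hz.2)
  have hbottom := intervalIntegral_tendsto_integral (hline a ⟨le_rfl, hab⟩)
    tendsto_neg_atTop_atBot tendsto_id
  have htop := intervalIntegral_tendsto_integral (hline b ⟨hab, le_rfl⟩)
    tendsto_neg_atTop_atBot tendsto_id
  have hright := hside id (hg0.mono_left atTop_le_cocompact)
  have hleft := hside Neg.neg ((hg0.mono_left atBot_le_cocompact).comp tendsto_neg_atTop_atBot)
  have hlim := ((hbottom.sub htop).add hright).sub hleft
  simp only [id, ofReal_neg, hrect, add_zero, sub_zero] at hlim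
  exact sub_eq_zero.1 (tendsto_nhds_unique tendsto_const_nhds hlim).symm

-- The Gaussian factor decays along every horizontal line, so contours may be shifted even
-- though `F` is merely bounded.
noncomputable def dampedIntegrand (F : ℂ → E) (ξ ε : ℝ) (z : ℂ) : E :=
  cexp (-(I * ξ * z) - ε * z ^ 2) • F z

section Damped

variable {F : ℂ → E} {M ξ ε a : ℝ}

lemma norm_dampedIntegrand (F : ℂ → E) (ξ ε : ℝ) (z : ℂ) :
    ‖dampedIntegrand F ξ ε z‖ = Real.exp (ξ * z.im + ε * (z.im ^ 2 - z.re ^ 2)) * ‖F z‖ := by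
  rw [dampedIntegrand, norm_smul, norm_exp]
  congr 2
  simp [pow_two]
  ring

lemma norm_dampedIntegrand_add_mul_I_le (hM : ∀ z : ℂ, z.im ≤ 0 → ‖F z‖ ≤ M) (ha : a ≤ 0)
    (t : ℝ) : ‖dampedIntegrand F ξ ε (t + a * I)‖ ≤
      M * Real.exp (ξ * a + ε * a ^ 2) * Real.exp (-ε * t ^ 2) := by
  have hz : (t + a * I : ℂ).im ≤ 0 := by simpa using ha
  rw [norm_dampedIntegrand, mul_assoc, ← Real.exp_add, mul_comm]
  refine (mul_le_mul_of_nonneg_right (hM _ hz) (Real.exp_nonneg _)).trans_eq ?_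
  congr 2
  simp
  ring

lemma norm_dampedIntegrand_le_of_mem_strip (hM : ∀ z : ℂ, z.im ≤ 0 → ‖F z‖ ≤ M) (hε : 0 ≤ ε)
    {z : ℂ} (ha : a ≤ z.im) (hz : z.im ≤ 0) : ‖dampedIntegrand F ξ ε z‖ ≤
      M * Real.exp (|ξ| * |a| + ε * a ^ 2) * Real.exp (-ε * z.re ^ 2) := by
  have hM0 : 0 ≤ M := (norm_nonneg _).trans (hM z hz)
  have hexp : ξ * z.im + ε * (z.im ^ 2 - z.re ^ 2) ≤ |ξ| * |a| + ε * a ^ 2 + -ε * z.re ^ 2 := by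
    have h1 : ξ * z.im ≤ |ξ| * |a| := (le_abs_self _).trans <| by
      rw [abs_mul]; exact mul_le_mul_of_nonneg_left (abs_le_abs_of_nonpos hz ha) (abs_nonneg _)
    have h2 : z.im ^ 2 ≤ a ^ 2 := by nlinarith
    nlinarith
  rw [norm_dampedIntegrand, mul_assoc, ← Real.exp_add, mul_comm]
  exact mul_le_mul (hM z hz) (Real.exp_le_exp.2 hexp) (Real.exp_nonneg _) hM0

lemma continuousOn_dampedIntegrand (hc : ContinuousOn F {z : ℂ | z.im ≤ 0}) :
    ContinuousOn (dampedIntegrand F ξ ε) {z : ℂ | z.im ≤ 0} :=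
  (Continuous.continuousOn (by fun_prop)).smul hc

lemma continuous_dampedIntegrand_add_mul_I (hc : ContinuousOn F {z : ℂ | z.im ≤ 0}) (ha : a ≤ 0) :
    Continuous fun t : ℝ => dampedIntegrand F ξ ε (t + a * I) :=
  (continuousOn_dampedIntegrand hc).comp_continuous (f := fun t : ℝ => t + a * I) (by fun_prop)
    fun t => by simpa using ha

lemma integrable_dampedIntegrand_add_mul_I (hM : ∀ z : ℂ, z.im ≤ 0 → ‖F z‖ ≤ M)
    (hc : ContinuousOn F {z : ℂ | z.im ≤ 0}) (hε : 0 < ε) (ha : a ≤ 0) :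
    Integrable fun t : ℝ => dampedIntegrand F ξ ε (t + a * I) :=
  ((integrable_exp_neg_mul_sq hε).const_mul _).mono'
    (continuous_dampedIntegrand_add_mul_I hc ha).aestronglyMeasurable
    (.of_forall (norm_dampedIntegrand_add_mul_I_le hM ha))

theorem integral_dampedIntegrand_add_mul_I [CompleteSpace E]
    (hM : ∀ z : ℂ, z.im ≤ 0 → ‖F z‖ ≤ M) (hd : DifferentiableOn ℂ F {z : ℂ | z.im < 0})
    (hc : ContinuousOn F {z : ℂ | z.im ≤ 0}) (hε : 0 < ε) (ha : a ≤ 0) :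
    ∫ t : ℝ, dampedIntegrand F ξ ε (t + a * I) = ∫ t : ℝ, dampedIntegrand F ξ ε t := by
  have hgauss : Tendsto (fun x : ℝ => Real.exp (-ε * x ^ 2)) (cocompact ℝ) (𝓝 0) := by
    simpa using tendsto_rpow_abs_mul_exp_neg_mul_sq_cocompact hε 0
  simpa using integral_add_mul_I_eq_of_strip ha (f := dampedIntegrand F ξ ε)
    ((continuousOn_dampedIntegrand hc).mono fun z hz => hz.2)
    (((Differentiable.differentiableOn (by fun_prop)).smul hd).mono fun z hz => hz.2)
    ((integrable_exp_neg_mul_sq hε).const_mul (M * Real.exp (|ξ| * |a| + ε * a ^ 2)))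
    (by simpa using hgauss.const_mul (M * Real.exp (|ξ| * |a| + ε * a ^ 2)))
    fun z hz => norm_dampedIntegrand_le_of_mem_strip hM hε.le hz.1 hz.2

theorem norm_integral_dampedIntegrand_le [CompleteSpace E]
    (hM : ∀ z : ℂ, z.im ≤ 0 → ‖F z‖ ≤ M) (hd : DifferentiableOn ℂ F {z : ℂ | z.im < 0})
    (hc : ContinuousOn F {z : ℂ | z.im ≤ 0}) (hξ : 0 ≤ ξ) (hε : 0 < ε) :
    ‖∫ t : ℝ, dampedIntegrand F ξ ε t‖ ≤ M * Real.exp (-ξ ^ 2 / (4 * ε)) * √(Real.pi / ε) := by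
  -- shifting to the line `Im z = -ξ / (2ε)` minimises the factor `e^{ξ Im z + ε (Im z)²}`
  have ha : -(ξ / (2 * ε)) ≤ 0 := neg_nonpos.2 (by positivity)
  have hval : ξ * -(ξ / (2 * ε)) + ε * (-(ξ / (2 * ε))) ^ 2 = -ξ ^ 2 / (4 * ε) := by
    field_simp
    ring
  rw [← integral_dampedIntegrand_add_mul_I hM hd hc hε ha, ← integral_gaussian,
    ← integral_const_mul]
  refine norm_integral_le_of_norm_le ((integrable_exp_neg_mul_sq hε).const_mul _)
    (.of_forall fun t => ?_)
  simpa only [hval] using norm_dampedIntegrand_add_mul_I_le (ξ := ξ) (ε := ε) hM ha t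

end Damped

noncomputable def fourierLaplace (f : ℝ → E) (z : ℂ) : E :=
  ∫ t : ℝ, cexp (-(I * z * t)) • f t

lemma tendsto_integral_dampedIntegrand_nhdsGT_zero {F : ℂ → E}
    (hF : Integrable fun t : ℝ => F t) (ξ : ℝ) :
    Tendsto (fun ε => ∫ t : ℝ, dampedIntegrand F ξ ε t) (𝓝[>] 0)
      (𝓝 (fourierLaplace (fun t : ℝ => F t) ξ)) := by
  refine tendsto_integral_filter_of_dominated_convergence (fun t => ‖F t‖)
    (.of_forall fun ε => (Continuous.aestronglyMeasurable (by fun_prop)).smul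
      hF.aestronglyMeasurable) ?_ hF.norm (.of_forall fun t => ?_)
  · filter_upwards [self_mem_nhdsWithin] with ε (hε : 0 < ε)
    refine .of_forall fun t => ?_
    rw [norm_dampedIntegrand]
    refine mul_le_of_le_one_left (norm_nonneg _) (Real.exp_le_one_iff.2 ?_)
    simpa using mul_nonneg hε.le (sq_nonneg t)
  · have : Continuous fun ε : ℝ => dampedIntegrand F ξ ε t := by
      unfold dampedIntegrand
      fun_prop
    simpa [dampedIntegrand] using (this.tendsto 0).mono_left nhdsWithin_le_nhds

lemma tendsto_mul_exp_neg_div_mul_sqrt_div_nhdsGT_zero (M : ℝ) {c : ℝ} (hc : 0 < c) :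
    Tendsto (fun ε : ℝ => M * Real.exp (-c / ε) * √(Real.pi / ε)) (𝓝[>] 0) (𝓝 0) := by
  have key : Tendsto (fun x : ℝ => M * √Real.pi * (x ^ (1 / 2 : ℝ) * Real.exp (-c * x)))
      atTop (𝓝 0) := by
    simpa using (tendsto_rpow_mul_exp_neg_mul_atTop_nhds_zero (1 / 2) c hc).const_mul
      (M * √Real.pi)
  refine (key.comp tendsto_inv_nhdsGT_zero).congr' ?_
  filter_upwards [self_mem_nhdsWithin] with ε (hε : 0 < ε)
  rw [Function.comp_apply, div_eq_mul_inv Real.pi, Real.sqrt_mul Real.pi_pos.le,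
    Real.sqrt_eq_rpow ε⁻¹, div_eq_mul_inv (-c)]
  ring

theorem fourierLaplace_eq_zero_of_pos [CompleteSpace E] {F : ℂ → E} {M ξ : ℝ}
    (hM : ∀ z : ℂ, z.im ≤ 0 → ‖F z‖ ≤ M) (hd : DifferentiableOn ℂ F {z : ℂ | z.im < 0})
    (hc : ContinuousOn F {z : ℂ | z.im ≤ 0}) (hF : Integrable fun t : ℝ => F t) (hξ : 0 < ξ) :
    fourierLaplace (fun t : ℝ => F t) ξ = 0 := by
  refine tendsto_nhds_unique (tendsto_integral_dampedIntegrand_nhdsGT_zero hF ξ)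
    (squeeze_zero_norm' ?_ (tendsto_mul_exp_neg_div_mul_sqrt_div_nhdsGT_zero M
      (c := ξ ^ 2 / 4) (by positivity)))
  filter_upwards [self_mem_nhdsWithin] with ε (hε : 0 < ε)
  convert norm_integral_dampedIntegrand_le hM hd hc hξ.le hε using 4
  ring

lemma norm_cexp_neg_I_mul_smul_le {f : ℝ → E} {C γ η : ℝ}
    (hC : ∀ t, ‖f t‖ ≤ C * Real.exp (-γ * |t|)) {z : ℂ} (hz : |z.im| ≤ γ - η) (t : ℝ) :
    ‖cexp (-(I * z * t)) • f t‖ ≤ C * Real.exp (-η * |t|) := by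
  have hre : (-(I * z * t)).re = t * z.im := by simp [mul_comm]
  have hexp : t * z.im ≤ |t| * (γ - η) :=
    (le_abs_self _).trans (by rw [abs_mul]; exact mul_le_mul_of_nonneg_left hz (abs_nonneg t))
  calc ‖cexp (-(I * z * t)) • f t‖ ≤ Real.exp (|t| * (γ - η)) * (C * Real.exp (-γ * |t|)) := by
        rw [norm_smul, norm_exp, hre]
        exact mul_le_mul (Real.exp_le_exp.2 hexp) (hC t) (norm_nonneg _) (Real.exp_nonneg _)
    _ = C * Real.exp (-η * |t|) := by
        rw [mul_left_comm, ← Real.exp_add]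
        ring_nf

theorem differentiableOn_fourierLaplace [CompleteSpace E] {f : ℝ → E} {C γ : ℝ}
    (hf : AEStronglyMeasurable f) (hC : ∀ t, ‖f t‖ ≤ C * Real.exp (-γ * |t|)) :
    DifferentiableOn ℂ (fourierLaplace f) {z : ℂ | |z.im| < γ} := by
  intro z₀ (hz₀ : |z₀.im| < γ)
  set δ := (γ - |z₀.im|) / 3 with hδ_def
  have hδ : 0 < δ := div_pos (sub_pos.2 hz₀) three_pos
  have hball : ∀ z ∈ Metric.ball z₀ δ, |z.im| ≤ γ - 2 * δ := fun z hz => by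
    have h1 := (abs_im_le_norm (z - z₀)).trans (mem_ball_iff_norm.1 hz).le
    have h2 := abs_sub_abs_le_abs_sub z.im z₀.im
    rw [sub_im] at h1
    linarith
  have hmeas : ∀ z : ℂ, AEStronglyMeasurable fun t : ℝ => cexp (-(I * z * t)) • f t :=
    fun z => (Continuous.aestronglyMeasurable (by fun_prop)).smul hf
  have hderiv : ∀ t : ℝ, ∀ z : ℂ, HasDerivAt (fun w => cexp (-(I * w * t)) • f t)
      ((cexp (-(I * z * t)) * -(I * t)) • f t) z := fun t z => by
    simpa [mul_right_comm I] using
      ((((hasDerivAt_id z).const_mul I).mul_const (t : ℂ)).neg.cexp).smul_const (f t)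
  -- `|t| e^{-2δ|t|} ≤ δ⁻¹ e^{-δ|t|}` dominates the derivative on the ball
  have hbound : ∀ t : ℝ, ∀ z ∈ Metric.ball z₀ δ,
      ‖(cexp (-(I * z * t)) * -(I * t)) • f t‖ ≤ C / δ * Real.exp (-δ * |t|) := by
    intro t z hz
    have hlin : |t| ≤ Real.exp (δ * |t|) / δ := by
      rw [le_div_iff₀ hδ, mul_comm]
      linarith [Real.add_one_le_exp (δ * |t|)]
    rw [mul_comm, mul_smul, norm_smul]
    calc ‖-(I * t)‖ * ‖cexp (-(I * z * t)) • f t‖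
        ≤ Real.exp (δ * |t|) / δ * (C * Real.exp (-(2 * δ) * |t|)) := by
          refine mul_le_mul (by simpa using hlin) (norm_cexp_neg_I_mul_smul_le hC
            (hball z hz) t) (norm_nonneg _) (by positivity)
      _ = C / δ * Real.exp (-δ * |t|) := by
          rw [div_mul_eq_mul_div, mul_left_comm, ← Real.exp_add]
          ring_nf
  refine (hasDerivAt_integral_of_dominated_loc_of_deriv_le (Metric.ball_mem_nhds z₀ hδ)
    (.of_forall hmeas) (((integrable_exp_neg_mul_abs (by positivity : 0 < 3 * δ)).const_mul C).mono'
      (hmeas z₀) (.of_forall (norm_cexp_neg_I_mul_smul_le hC (by linarith))))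
    ((Continuous.aestronglyMeasurable (by fun_prop)).smul hf) (.of_forall hbound)
    ((integrable_exp_neg_mul_abs hδ).const_mul _)
    (.of_forall fun t z _ => hderiv t z)).2.differentiableAt.differentiableWithinAt

theorem fourierLaplace_eq_zero_of_forall_pos [CompleteSpace E] {f : ℝ → E} {C γ : ℝ}
    (hf : AEStronglyMeasurable f) (hC : ∀ t, ‖f t‖ ≤ C * Real.exp (-γ * |t|)) (hγ : 0 < γ)
    (hpos : ∀ ξ : ℝ, 0 < ξ → fourierLaplace f ξ = 0) (ξ : ℝ) : fourierLaplace f ξ = 0 := by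
  have hstrip : {z : ℂ | |z.im| < γ} = im ⁻¹' Ioo (-γ) γ := by
    ext z
    simp [abs_lt]
  have hconn : IsPreconnected {z : ℂ | |z.im| < γ} := by
    rw [hstrip]
    exact ((convex_Ioo (-γ) γ).linear_preimage imLm).isPreconnected
  have hopen : IsOpen {z : ℂ | |z.im| < γ} := by
    rw [hstrip]
    exact isOpen_Ioo.preimage continuous_im
  have hreal : Tendsto ofReal (𝓝[≠] 1) (𝓝[≠] (1 : ℂ)) :=
    tendsto_nhdsWithin_of_tendsto_nhds_of_eventually_within _
      (by simpa using (continuous_ofReal.tendsto 1).mono_left nhdsWithin_le_nhds)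
      (eventually_mem_nhdsWithin.mono fun x hx => by simpa using hx)
  have hfreq : ∃ᶠ z in 𝓝[≠] (1 : ℂ), fourierLaplace f z = 0 :=
    hreal.frequently (eventually_nhdsWithin_of_eventually_nhds
      ((eventually_gt_nhds one_pos).mono hpos)).frequently
  exact ((differentiableOn_fourierLaplace hf hC).analyticOnNhd hopen
    ).eqOn_zero_of_preconnected_of_frequently_eq_zero hconn (by simpa using hγ) hfreq
    (by simpa using hγ)

theorem eq_zero_of_fourierLaplace_eq_zero [CompleteSpace E] {f : ℝ → E} (hc : Continuous f)
    (hi : Integrable f) (h0 : ∀ ξ : ℝ, fourierLaplace f ξ = 0) : f = 0 := by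
  -- `𝓕` uses the kernel `e^{-2πivw}`, i.e. frequency `ξ = 2πw`
  have hF : 𝓕 f = 0 := funext fun w => by
    rw [Real.fourier_real_eq_integral_exp_smul, Pi.zero_apply, ← h0 (2 * Real.pi * w)]
    congr with v
    push_cast
    ring_nf
  rw [← hc.fourierInv_fourier_eq hi (by rw [hF]; exact integrable_zero _ _ _), hF]
  ext
  simp [Real.fourierInv_eq]

theorem eq_zero_of_forall_ofReal_eq_zero [CompleteSpace E] {F : ℂ → E} {M : ℝ}
    (hM : ∀ z : ℂ, z.im ≤ 0 → ‖F z‖ ≤ M) (hd : DifferentiableOn ℂ F {z : ℂ | z.im < 0})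
    (hc : ContinuousOn F {z : ℂ | z.im ≤ 0}) (h0 : ∀ t : ℝ, F t = 0) {τ : ℂ} (hτ : τ.im ≤ 0) :
    F τ = 0 := by
  set h : ℝ → E := fun t => dampedIntegrand F 0 1 (t + τ.im * I) with h_def
  have hfactor : ∀ ξ t : ℝ, dampedIntegrand F ξ 1 (t + τ.im * I) =
      cexp (ξ * τ.im) • cexp (-(I * ξ * t)) • h t := by
    intro ξ t
    simp only [h_def, dampedIntegrand, smul_smul, ← Complex.exp_add]
    congr 2
    push_cast
    linear_combination -(ξ * τ.im : ℂ) * I_sq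
  have hFL : ∀ ξ : ℝ, fourierLaplace h ξ = 0 := fun ξ => by
    have := integral_dampedIntegrand_add_mul_I (ξ := ξ) hM hd hc one_pos hτ
    rw [funext (hfactor ξ), integral_smul] at this
    simp only [dampedIntegrand, h0, smul_zero, integral_zero] at this
    exact (smul_eq_zero.1 this).resolve_left (exp_ne_zero _)
  have hh : h = 0 := eq_zero_of_fourierLaplace_eq_zero (continuous_dampedIntegrand_add_mul_I hc hτ)
    (integrable_dampedIntegrand_add_mul_I hM hc one_pos hτ) hFL
  simpa [h_def, dampedIntegrand, re_add_im] using congrFun hh τ.re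

end

/-- a nonzero bounded Hilbert-space-valued function, analytic on the open
lower half-plane and continuous up to the real axis, cannot decay exponentially in both
time directions on the real line. -/
theorem no_two_sided_exponential_decay
    {H : Type*} [NormedAddCommGroup H] [InnerProductSpace ℂ H] [CompleteSpace H]
    (F : ℂ → H)
    (hbdd : ∃ C : ℝ, ∀ τ : ℂ, τ.im ≤ 0 → ‖F τ‖ ≤ C)
    (hd : DifferentiableOn ℂ F {τ : ℂ | τ.im < 0})
    (hc : ContinuousOn F {τ : ℂ | τ.im ≤ 0})
    (hnz : ∃ τ : ℂ, τ.im ≤ 0 ∧ F τ ≠ 0) :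
    ∀ γ : ℝ, 0 < γ →
      ¬ ∃ C : ℝ, 0 < C ∧ ∀ t : ℝ, ‖F (t : ℂ)‖ ≤ C * Real.exp (-γ * |t|) := by
  rintro γ hγ ⟨C, -, hC⟩
  obtain ⟨M, hM⟩ := hbdd
  obtain ⟨τ, hτ, hFτ⟩ := hnz
  have hcont : Continuous fun t : ℝ => F t :=
    hc.comp_continuous continuous_ofReal fun t => by simp
  have hint : Integrable fun t : ℝ => F t :=
    ((integrable_exp_neg_mul_abs hγ).const_mul C).mono' hcont.aestronglyMeasurable (.of_forall hC)
  have hreal : ∀ ξ : ℝ, fourierLaplace (fun t : ℝ => F t) ξ = 0 :=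
    fourierLaplace_eq_zero_of_forall_pos hcont.aestronglyMeasurable hC hγ
      fun ξ hξ => fourierLaplace_eq_zero_of_pos hM hd hc hint hξ
  have hF0 := eq_zero_of_fourierLaplace_eq_zero hcont hint hreal
  exact hFτ (eq_zero_of_forall_ofReal_eq_zero hM hd hc (congrFun hF0) hτ)
end
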